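/- arXiv:2305.08308 — 4 statements merged into one kernel-verified Lean document; each statement's English description precedes it below -/
import Mathlib

section
/- Let p be an odd prime and G = ℤ/pℤ ⊕ ℤ/pℤ with generators τ₁, τ₂; set tᵢ = τᵢ − 1, T₃ = ∑_{j=0}^{p-1}(τ₁τ₂)^j, T_{p+1} = ∑_{j=0}^{p-1}(τ₁τ₂^{p-1})^j, and T_G = ∑_{g∈G} g. Then there exist κ₁, κ₂ ∈ ℤ[G] with t₁κ₁ + t₂κ₂ + ((p−1)/2)·T₃ + ((p−1)/2)·T_{p+1} = T_G − p. -/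
/-! Every group element `g = τ₁^a τ₂^b` satisfies `g - 1 ∈ (t₁, t₂)`, so the ideal `(t₁, t₂)`
contains every sum of `n` group elements minus `n`. Hence `T_G - p²` and `T₃ - p`, `T_{p+1} - p`
lie in it, and since `p² - p = 2 · ((p - 1)/2) · p` for odd `p`, so does
`T_G - p - ((p - 1)/2) (T₃ + T_{p+1})`. -/

open MonoidAlgebra

abbrev GrpP (p : ℕ) := Multiplicative (ZMod p × ZMod p)
abbrev GA (p : ℕ) := MonoidAlgebra ℤ (GrpP p)

/-- The group element `τ₁^a τ₂^b` viewed in the group ring `ℤ[G]`. -/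
noncomputable def τ (p : ℕ) (v : ZMod p × ZMod p) : GA p :=
  MonoidAlgebra.of ℤ (GrpP p) (Multiplicative.ofAdd v)

/-- The "trace" element `1 + σ + ⋯ + σ^{p-1}` for `σ = τ₁^a τ₂^b`. -/
noncomputable def tr (p : ℕ) (v : ZMod p × ZMod p) : GA p :=
  ∑ k ∈ Finset.range p, τ p v ^ k

/-- The sum of all group elements `T_G = ∑_{g ∈ G} g`. -/
noncomputable def TG (p : ℕ) [NeZero p] : GA p :=
  ∑ g : GrpP p, MonoidAlgebra.of ℤ (GrpP p) g

section SubOneMem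

variable {R : Type*} [CommRing R] {I : Ideal R}

lemma mul_sub_one_mem {x y : R} (hx : x - 1 ∈ I) (hy : y - 1 ∈ I) : x * y - 1 ∈ I := by
  have hxy : x * y - 1 = (x - 1) * y + (y - 1) := by ring
  rw [hxy]
  exact I.add_mem (I.mul_mem_right y hx) hy

lemma pow_sub_one_mem {x : R} (hx : x - 1 ∈ I) (n : ℕ) : x ^ n - 1 ∈ I :=
  I.mem_of_dvd (sub_one_dvd_pow_sub_one x n) hx

lemma sum_sub_card_mem {ι : Type*} (s : Finset ι) {f : ι → R} (hf : ∀ i ∈ s, f i - 1 ∈ I) :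
    ∑ i ∈ s, f i - (s.card : R) ∈ I := by
  have hsum : ∑ i ∈ s, f i - (s.card : R) = ∑ i ∈ s, (f i - 1) := by
    simp [Finset.sum_sub_distrib]
  rw [hsum]
  exact I.sum_mem hf

end SubOneMem

noncomputable def tIdeal (p : ℕ) : Ideal (GA p) :=
  Ideal.span {τ p (1, 0) - 1, τ p (0, 1) - 1}

lemma τ_add (p : ℕ) (v w : ZMod p × ZMod p) : τ p (v + w) = τ p v * τ p w := by
  simp only [τ, ofAdd_add, map_mul]

lemma τ_pow (p : ℕ) (v : ZMod p × ZMod p) (n : ℕ) : τ p v ^ n = τ p (n • v) := by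
  simp only [τ, ← map_pow, ofAdd_nsmul]

lemma τ_sub_one_mem_tIdeal (p : ℕ) [NeZero p] (v : ZMod p × ZMod p) :
    τ p v - 1 ∈ tIdeal p := by
  obtain ⟨a, b⟩ := v
  have hdecomp : τ p (a, b) = τ p (1, 0) ^ a.val * τ p (0, 1) ^ b.val := by
    rw [τ_pow, τ_pow, ← τ_add]
    simp
  rw [hdecomp]
  exact mul_sub_one_mem (pow_sub_one_mem (Ideal.subset_span (by simp)) _)
    (pow_sub_one_mem (Ideal.subset_span (by simp)) _)

lemma tr_sub_mem_tIdeal (p : ℕ) [NeZero p] (v : ZMod p × ZMod p) :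
    tr p v - p ∈ tIdeal p := by
  simpa [tr] using sum_sub_card_mem (Finset.range p)
    fun k _ => pow_sub_one_mem (τ_sub_one_mem_tIdeal p v) k

lemma TG_sub_mem_tIdeal (p : ℕ) [NeZero p] : TG p - (p : GA p) ^ 2 ∈ tIdeal p := by
  have hcard : ((Finset.univ : Finset (GrpP p)).card : GA p) = (p : GA p) ^ 2 := by
    simp [ZMod.card, sq]
  rw [← hcard]
  exact sum_sub_card_mem _ fun g _ => τ_sub_one_mem_tIdeal p (Multiplicative.toAdd g)

theorem stmt5_general (p : ℕ) [NeZero p] (hodd : Odd p) :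
    ∃ κ₁ κ₂ : GA p,
      (τ p (1, 0) - 1) * κ₁ + (τ p (0, 1) - 1) * κ₂
        + (((p - 1) / 2 : ℕ) : GA p) * tr p (1, 1)
        + (((p - 1) / 2 : ℕ) : GA p) * tr p (1, -1)
      = TG p - (p : GA p) := by
  set c : GA p := (((p - 1) / 2 : ℕ) : GA p)
  have htwo_c : 2 * c = (p : GA p) - 1 := by
    obtain ⟨k, rfl⟩ := hodd
    simp [c]
  have hmem : TG p - (p : GA p) - c * tr p (1, 1) - c * tr p (1, -1) ∈ tIdeal p := by
    have hsplit : TG p - (p : GA p) - c * tr p (1, 1) - c * tr p (1, -1)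
        = (TG p - (p : GA p) ^ 2) - c * (tr p (1, 1) - p) - c * (tr p (1, -1) - p) := by
      linear_combination -(p : GA p) * htwo_c
    rw [hsplit]
    exact sub_mem (sub_mem (TG_sub_mem_tIdeal p)
      (Ideal.mul_mem_left _ c (tr_sub_mem_tIdeal p _)))
      (Ideal.mul_mem_left _ c (tr_sub_mem_tIdeal p _))
  obtain ⟨κ₁, κ₂, hκ⟩ := Ideal.mem_span_pair.mp hmem
  exact ⟨κ₁, κ₂, by linear_combination hκ⟩

theorem stmt5 (p : ℕ) [NeZero p] (hp : p.Prime) (hodd : Odd p) :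
    ∃ κ₁ κ₂ : GA p,
      (τ p (1, 0) - 1) * κ₁ + (τ p (0, 1) - 1) * κ₂
        + (((p - 1) / 2 : ℕ) : GA p) * tr p (1, 1)
        + (((p - 1) / 2 : ℕ) : GA p) * tr p (1, -1)
      = TG p - (p : GA p) :=
  stmt5_general p hodd
end

section
/- With the notation of the four-term sequence for an odd prime p, define h₁ : M₂ → M₁ by h₁(ξ, n·T_G) = ξ·T_G + (p−1)n·T_G and h₂ : M₃ → M₂ by h₂(ξ₁, ξ₂, ξ₃T₃, ξ₄T_{p+1}) = (ξ₁κ₁ + ξ₂κ₂ − ((p−1)/2)ξ₃T₃ − ((p−1)/2)ξ₄T_{p+1}, ξ₃T₃·T_G), where κ₁, κ₂ satisfy t₁κ₁ + t₂κ₂ + ((p−1)/2)T₃ + ((p−1)/2)T_{p+1} = T_G − p. Then d₁ ∘ h₁ + h₂ ∘ d₂ = p·id on M₂. -/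
open MonoidAlgebra

lemma of_mul_TG (p : ℕ) [NeZero p] (g : GrpP p) :
    MonoidAlgebra.of ℤ (GrpP p) g * TG p = TG p := by
  unfold TG
  rw [Finset.mul_sum]
  exact Fintype.sum_equiv (Equiv.mulLeft g) _ _ (fun h => by rw [← map_mul]; rfl)

lemma tr_mul_TG (p : ℕ) [NeZero p] (v : ZMod p × ZMod p) :
    tr p v * TG p = (p : GA p) * TG p := by
  unfold tr
  rw [Finset.sum_mul]
  have : ∀ k ∈ Finset.range p, τ p v ^ k * TG p = TG p := by
    intro k _
    rw [τ, ← map_pow, of_mul_TG]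
  rw [Finset.sum_congr rfl this, Finset.sum_const, Finset.card_range,
    nsmul_eq_mul]

lemma TG_mul_TG (p : ℕ) [NeZero p] :
    TG p * TG p = (p : GA p) ^ 2 * TG p := by
  nth_rewrite 1 [TG]
  rw [Finset.sum_mul]
  have : ∀ g ∈ Finset.univ, MonoidAlgebra.of ℤ (GrpP p) g * TG p = TG p :=
    fun g _ => of_mul_TG p g
  rw [Finset.sum_congr rfl this, Finset.sum_const, nsmul_eq_mul]
  have : (Fintype.card (GrpP p) : GA p) = (p : GA p) ^ 2 := by
    simp [GrpP, ZMod.card, sq]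
  rw [Finset.card_univ, this]

/-- `d₁ ∘ h₁ + h₂ ∘ d₂ = p·id` on `M₂ = ℤ[G] ⊕ ℤ[G]·T_G`, stated elementwise: for
`(η, ξ)` with `ξ ∈ ℤ[G]·T_G`, `h₁(η, ξ) = η·T_G + (p−1)·ξ`,
`d₂(η, ξ) = (−ηt₁, −ηt₂, ηT₃ + ξ, ηT_{p+1} + ξ)` and
`h₂(ξ₁, ξ₂, m₃, m₄) = (ξ₁κ₁ + ξ₂κ₂ − ((p−1)/2)m₃ − ((p−1)/2)m₄, m₃·T_G)`. -/
theorem stmt9 (p : ℕ) [NeZero p] (hp : p.Prime) (hodd : Odd p) (κ₁ κ₂ : GA p)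
    (hκ : (τ p (1, 0) - 1) * κ₁ + (τ p (0, 1) - 1) * κ₂
        + (((p - 1) / 2 : ℕ) : GA p) * tr p (1, 1)
        + (((p - 1) / 2 : ℕ) : GA p) * tr p (1, -1)
      = TG p - (p : GA p)) :
    ∀ η ξ : GA p, ξ ∈ Ideal.span ({TG p} : Set (GA p)) →
      -- first component of d₁(h₁(η,ξ)) + h₂(d₂(η,ξ)) = p·η
      ((η * TG p + ((p : GA p) - 1) * ξ)
        + ((-(η * (τ p (1, 0) - 1))) * κ₁ + (-(η * (τ p (0, 1) - 1))) * κ₂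
            - (((p - 1) / 2 : ℕ) : GA p) * (η * tr p (1, 1) + ξ)
            - (((p - 1) / 2 : ℕ) : GA p) * (η * tr p (1, -1) + ξ))
        = (p : GA p) * η) ∧
      -- second component: −p·h₁(η,ξ) + (ηT₃ + ξ)·T_G = p·ξ
      (-(p : GA p) * (η * TG p + ((p : GA p) - 1) * ξ)
        + (η * tr p (1, 1) + ξ) * TG p = (p : GA p) * ξ) := by
  intro η ξ hξ
  obtain ⟨c, rfl⟩ := Ideal.mem_span_singleton'.mp hξ
  have hq : (2 : GA p) * (((p - 1) / 2 : ℕ) : GA p) = (p : GA p) - 1 := by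
    have heven : Even (p - 1) := Nat.Odd.sub_odd hodd odd_one
    have h2 : 2 * ((p - 1) / 2) = p - 1 := Nat.mul_div_cancel' heven.two_dvd
    calc (2 : GA p) * (((p - 1) / 2 : ℕ) : GA p) = ((2 * ((p - 1) / 2) : ℕ) : GA p) := by
          push_cast; ring
      _ = ((p - 1 : ℕ) : GA p) := by rw [h2]
      _ = (p : GA p) - 1 := by
          have := hp.one_le
          push_cast [Nat.cast_sub this]
          ring
  constructor
  · linear_combination (-η) * hκ - (c * TG p) * hq
  · linear_combination η * tr_mul_TG p (1, 1) + c * TG_mul_TG p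
end

section
/- With the notation of the four-term sequence for an odd prime p, the map m ↦ p·m − d₂(h₂(m)) from M₃ to M₃ vanishes on the image of d₂; that is, for every (η, n·T_G) ∈ M₂, p·d₂(η, n·T_G) − d₂(h₂(d₂(η, n·T_G))) = 0. -/
open MonoidAlgebra

lemma TG_mul_of (p : ℕ) [NeZero p] (g : GrpP p) :
    TG p * MonoidAlgebra.of ℤ (GrpP p) g = TG p := by
  unfold TG
  rw [Finset.sum_mul]
  simp_rw [← map_mul]
  exact Fintype.sum_equiv (Equiv.mulRight g) _ _ (fun h => rfl)

lemma TG_mul_τ_sub_one (p : ℕ) [NeZero p] (v : ZMod p × ZMod p) :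
    TG p * (τ p v - 1) = 0 := by
  rw [mul_sub, mul_one, τ, TG_mul_of, sub_self]

lemma TG_mul_tr (p : ℕ) [NeZero p] (v : ZMod p × ZMod p) :
    TG p * tr p v = (p : GA p) * TG p := by
  unfold tr
  rw [Finset.mul_sum]
  have h : ∀ k, TG p * τ p v ^ k = TG p := by
    intro k
    rw [τ, ← map_pow, TG_mul_of]
  simp_rw [h]
  rw [Finset.sum_const, Finset.card_range, nsmul_eq_mul]

/-- The map `m ↦ p·m − d₂(h₂(m))` on `M₃` vanishes on the image of `d₂`,
stated elementwise: for `(η, ξ) ∈ M₂` (so `ξ ∈ ℤ[G]·T_G`), writing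
`d₂(η, ξ) = (−ηt₁, −ηt₂, ηT₃ + ξ, ηT_{p+1} + ξ)` and
`h₂(ξ₁, ξ₂, m₃, m₄) = (ξ₁κ₁ + ξ₂κ₂ − ((p−1)/2)m₃ − ((p−1)/2)m₄, m₃·T_G)`,
all four components of `p·d₂(η,ξ) − d₂(h₂(d₂(η,ξ)))` are zero. -/
theorem stmt10 (p : ℕ) [NeZero p] (hp : p.Prime) (hodd : Odd p) (κ₁ κ₂ : GA p)
    (hκ : (τ p (1, 0) - 1) * κ₁ + (τ p (0, 1) - 1) * κ₂
        + (((p - 1) / 2 : ℕ) : GA p) * tr p (1, 1)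
        + (((p - 1) / 2 : ℕ) : GA p) * tr p (1, -1)
      = TG p - (p : GA p)) :
    ∀ η ξ : GA p, ξ ∈ Ideal.span ({TG p} : Set (GA p)) →
      let t₁ := τ p (1, 0) - 1
      let t₂ := τ p (0, 1) - 1
      let T₃ := tr p (1, 1)
      let T₄ := tr p (1, -1)
      let c : GA p := (((p - 1) / 2 : ℕ) : GA p)
      let y₁ := (-(η * t₁)) * κ₁ + (-(η * t₂)) * κ₂
                  - c * (η * T₃ + ξ) - c * (η * T₄ + ξ)
      let y₂ := (η * T₃ + ξ) * TG p
      (p : GA p) * (-(η * t₁)) - (-(y₁ * t₁)) = 0 ∧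
      (p : GA p) * (-(η * t₂)) - (-(y₁ * t₂)) = 0 ∧
      (p : GA p) * (η * T₃ + ξ) - (y₁ * T₃ + y₂) = 0 ∧
      (p : GA p) * (η * T₄ + ξ) - (y₁ * T₄ + y₂) = 0 := by
  intro η ξ hξ
  obtain ⟨a, ha⟩ := Ideal.mem_span_singleton'.mp hξ
  subst ha
  have h1 : TG p * (τ p (1, 0) - 1) = 0 := TG_mul_τ_sub_one p _
  have h2 : TG p * (τ p (0, 1) - 1) = 0 := TG_mul_τ_sub_one p _
  have h3 : TG p * tr p (1, 1) = (p : GA p) * TG p := TG_mul_tr p _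
  have h4 : TG p * tr p (1, -1) = (p : GA p) * TG p := TG_mul_tr p _
  have h5 : TG p * TG p = (p : GA p) ^ 2 * TG p := TG_mul_TG p
  have hc : 2 * ((((p - 1) / 2 : ℕ) : GA p)) = (p : GA p) - 1 := by
    obtain ⟨k, hk⟩ := hodd
    subst hk
    have : (2 * k + 1 - 1) / 2 = k := by omega
    rw [this]
    push_cast
    ring
  refine ⟨?_, ?_, ?_, ?_⟩
  · linear_combination (-η * (τ p (1, 0) - 1)) * hκ +
      (-2 * (((p - 1) / 2 : ℕ) : GA p) * a - η) * h1
  · linear_combination (-η * (τ p (0, 1) - 1)) * hκ +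
      (-2 * (((p - 1) / 2 : ℕ) : GA p) * a - η) * h2
  · linear_combination (η * tr p (1, 1)) * hκ +
      (2 * (((p - 1) / 2 : ℕ) : GA p) * a) * h3 + (-a) * h5 +
      ((p : GA p) * a * TG p) * hc
  · linear_combination (η * tr p (1, -1)) * hκ +
      (2 * (((p - 1) / 2 : ℕ) : GA p) * a) * h4 + (-a) * h5 +
      ((p : GA p) * a * TG p) * hc + η * h4 + (-η) * h3
end

section
/- For G = ℤ/3ℤ ⊕ ℤ/3ℤ generated by τ₁, τ₂, in (ℤ/9ℤ)[G] one has for every g ∈ G: (g − 1)·t₁²·T₄ = −3·(g − 1)·(1 + t₁)·T₄, where t₁ = τ₁ − 1 and T₄ = 1 + τ₁τ₂² + τ₁²τ₂. -/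
open MonoidAlgebra

abbrev G3 := Multiplicative (ZMod 3 × ZMod 3)
abbrev R3 := MonoidAlgebra (ZMod 3) G3
abbrev R9 := MonoidAlgebra (ZMod 9) G3

/-- `τ₁^a τ₂^b` in `(ℤ/3ℤ)[G]`. -/
noncomputable def σ3 (v : ZMod 3 × ZMod 3) : R3 :=
  MonoidAlgebra.of (ZMod 3) G3 (Multiplicative.ofAdd v)

/-- `τ₁^a τ₂^b` in `(ℤ/9ℤ)[G]`. -/
noncomputable def σ9 (v : ZMod 3 × ZMod 3) : R9 :=
  MonoidAlgebra.of (ZMod 9) G3 (Multiplicative.ofAdd v)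

lemma σ9_mul (v w : ZMod 3 × ZMod 3) : σ9 v * σ9 w = σ9 (v + w) := by
  simp [σ9, ← map_mul, ← ofAdd_add]

lemma σ9_zero : σ9 (0,0) = 1 := rfl

/-- The norm element of the group algebra. -/
noncomputable def N9 : R9 := ∑ v : ZMod 3 × ZMod 3, σ9 v

lemma sum_expand : N9 = σ9 (0,0) + σ9 (0,1) + σ9 (0,2) + σ9 (1,0) + σ9 (1,1)
    + σ9 (1,2) + σ9 (2,0) + σ9 (2,1) + σ9 (2,2) := by
  rw [N9, Fintype.sum_prod_type,
    show (Finset.univ : Finset (ZMod 3)) = {0, 1, 2} from by decide]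
  repeat rw [Finset.sum_insert (by decide)]
  repeat rw [Finset.sum_singleton]
  repeat rw [Finset.sum_insert (by decide)]
  repeat rw [Finset.sum_singleton]
  abel

lemma hkey : (1 + σ9 (1,0) + σ9 (1,0)^2)
    * (1 + σ9 (1,0) * σ9 (0,1)^2 + σ9 (1,0)^2 * σ9 (0,1)) = N9 := by
  rw [sum_expand, ← σ9_zero]
  simp only [pow_two, σ9_mul, mul_add, add_mul, mul_one]
  simp only [Prod.mk_add_mk, add_zero, zero_add,
    show (1+1 : ZMod 3) = 2 from by decide, show (1+2 : ZMod 3) = 0 from by decide,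
    show (2+1 : ZMod 3) = 0 from by decide, show (2+2 : ZMod 3) = 1 from by decide]
  abel

lemma mulN (g : G3) : MonoidAlgebra.of (ZMod 9) G3 g * N9 = N9 := by
  rw [N9, Finset.mul_sum]
  refine Fintype.sum_equiv (Equiv.addLeft g.toAdd) _ _ ?_
  intro v
  simp [σ9, ← map_mul]

theorem stmt16 (g : G3) :
    let τ₁ := σ9 (1, 0); let τ₂ := σ9 (0, 1)
    let t₁ := τ₁ - 1
    let T₄ := 1 + τ₁ * τ₂ ^ 2 + τ₁ ^ 2 * τ₂
    (MonoidAlgebra.of (ZMod 9) G3 g - 1) * t₁ ^ 2 * T₄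
      = -3 * ((MonoidAlgebra.of (ZMod 9) G3 g - 1) * (1 + t₁) * T₄) := by
  show (MonoidAlgebra.of (ZMod 9) G3 g - 1) * (σ9 (1,0) - 1) ^ 2
        * (1 + σ9 (1,0) * σ9 (0,1) ^ 2 + σ9 (1,0) ^ 2 * σ9 (0,1))
      = -3 * ((MonoidAlgebra.of (ZMod 9) G3 g - 1) * (1 + (σ9 (1,0) - 1))
        * (1 + σ9 (1,0) * σ9 (0,1) ^ 2 + σ9 (1,0) ^ 2 * σ9 (0,1)))
  linear_combination mulN g + (MonoidAlgebra.of (ZMod 9) G3 g - 1) * hkey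
end
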